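/- arXiv:1402.0644 — 2 statements merged into one kernel-verified Lean document; each statement's English description precedes it below -/
import Mathlib

section
/- The Ollivier–Ricci curvature ric(x,x') = lim_{t→0} κ^t(x,x')/t exists and equals κ^{t_0}(x,x')/t_0 for any fixed t_0 ∈ (0, 1/2]. -/
open Classical Filter
noncomputable section

/-- A coupling (transference plan) between two measures on `V`, given as
nonnegative density functions. -/
def IsCoupling {V : Type*} (μ ν : V → ℝ) (ξ : V → V → ℝ) : Prop :=
  (∀ y y', 0 ≤ ξ y y') ∧ (∀ y, ∑' y', ξ y y' = μ y) ∧ (∀ y', ∑' y, ξ y y' = ν y')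

/-- The 1-Wasserstein distance between `μ` and `ν` for the cost function `ρ`. -/
def W1 {V : Type*} (ρ : V → V → ℝ) (μ ν : V → ℝ) : ℝ :=
  sInf {c | ∃ ξ, IsCoupling μ ν ξ ∧
    HasSum (fun p : V × V => ξ p.1 p.2 * ρ p.1 p.2) c}

/-- The shortest-path distance of a graph, as a real number. -/
def graphDist {V : Type*} (G : SimpleGraph V) (x y : V) : ℝ := G.dist x y

/-- The degree of a vertex. -/
def deg {V : Type*} (G : SimpleGraph V) (x : V) : ℕ := Nat.card {y | G.Adj x y}

/-- The Dirac measure at `x`. -/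
def dirac {V : Type*} (x : V) : V → ℝ := fun y => if y = x then 1 else 0

/-- The lazy random walk `μ_x^t = (1-t)·δ_x + t·(uniform measure on the neighbors of x)`. -/
def lazyWalk {V : Type*} (G : SimpleGraph V) (t : ℝ) (x y : V) : ℝ :=
  if y = x then 1 - t else if G.Adj x y then t / (deg G x) else 0

/-- The coarse Ricci curvature `κ^t(x,x') = 1 - W₁(μ_x^t, μ_{x'}^t)/d(x,x')`. -/
def kappa {V : Type*} (G : SimpleGraph V) (t : ℝ) (x x' : V) : ℝ :=
  1 - W1 (graphDist G) (lazyWalk G t x) (lazyWalk G t x') / graphDist G x x'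

/-!
For `s ≤ u` the lazy walk is a mixture `μ_x^s = (s/u) μ_x^u + (1 - s/u) δ_x`. Mixing a coupling of
`μ_x^u, μ_{x'}^u` with `δ_{(x,x')}` in these proportions gives a coupling of `μ_x^s, μ_{x'}^s`.
Conversely, a coupling of `μ_x^s, μ_{x'}^s` leaves at most `s` of the mass `1 - s` at `x` off `x'`,
so it charges `(x, x')` with at least `1 - 2s ≥ 1 - s/u` (as `u ≤ 1/2`); this is exactly what is needed
to remove the `δ_{(x,x')}` part again. Hence the coupling costs at time `s` are the image of those at
time `u` under `c ↦ (s/u) c + (1 - s/u) d(x,x')`, so `κ^s = (s/u) κ^u`, and `κ^t / t` is constant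
on `(0, 1/2]`.
-/

open Function

section Coupling

variable {V : Type*} {μ ν : V → ℝ} {ξ : V → V → ℝ} {ρ : V → V → ℝ}

def couplingCosts (ρ : V → V → ℝ) (μ ν : V → ℝ) : Set ℝ :=
  {c | ∃ ξ, IsCoupling μ ν ξ ∧ HasSum (fun p : V × V => ξ p.1 p.2 * ρ p.1 p.2) c}

lemma W1_eq_sInf_couplingCosts (ρ : V → V → ℝ) (μ ν : V → ℝ) :
    W1 ρ μ ν = sInf (couplingCosts ρ μ ν) :=
  rfl

lemma couplingCosts_bddBelow (hρ : ∀ y y', 0 ≤ ρ y y') : BddBelow (couplingCosts ρ μ ν) :=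
  ⟨0, fun _ ⟨_, hξ, hc⟩ => hc.nonneg fun _ => mul_nonneg (hξ.1 _ _) (hρ _ _)⟩

lemma isCoupling_mul (hμ0 : ∀ y, 0 ≤ μ y) (hν0 : ∀ y, 0 ≤ ν y) (hμ : HasSum μ 1)
    (hν : HasSum ν 1) : IsCoupling μ ν (fun y y' => μ y * ν y') :=
  ⟨fun y y' => mul_nonneg (hμ0 y) (hν0 y'),
    fun y => by rw [tsum_mul_left, hν.tsum_eq, mul_one],
    fun y' => by rw [tsum_mul_right, hμ.tsum_eq, one_mul]⟩

lemma couplingCosts_nonempty (hμ0 : ∀ y, 0 ≤ μ y) (hν0 : ∀ y, 0 ≤ ν y) (hμ : HasSum μ 1)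
    (hν : HasSum ν 1) (hμs : (support μ).Finite) (hνs : (support ν).Finite) :
    (couplingCosts ρ μ ν).Nonempty := by
  refine ⟨_, _, isCoupling_mul hμ0 hν0 hμ hν, (summable_of_hasFiniteSupport ?_).hasSum⟩
  refine (hμs.prod hνs).subset fun p hp => ?_
  have hμν : μ p.1 * ν p.2 ≠ 0 := left_ne_zero_of_mul hp
  exact ⟨left_ne_zero_of_mul hμν, right_ne_zero_of_mul hμν⟩

/- `IsCoupling` prescribes the marginals through `tsum`, which is `0` on non-summable families, so
the summability of rows and columns has to be extracted from the finiteness of the cost. -/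
lemma summable_row_of_summable_cost (hξ0 : ∀ y y', 0 ≤ ξ y y')
    (hρ : ∀ y y', y ≠ y' → 1 ≤ ρ y y')
    (hcost : Summable fun p : V × V => ξ p.1 p.2 * ρ p.1 p.2) (y : V) : Summable (ξ y) := by
  classical
  have hrow : Summable fun y' => ξ y y' * ρ y y' := hcost.comp_injective (Prod.mk_right_injective y)
  refine .of_nonneg_of_le (hξ0 y) (fun y' => ?_) (hrow.update y (ξ y y))
  rcases eq_or_ne y' y with rfl | h
  · simp
  · rw [update_of_ne h]
    exact le_mul_of_one_le_right (hξ0 y y') (hρ y y' h.symm)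

lemma summable_col_of_summable_cost (hξ0 : ∀ y y', 0 ≤ ξ y y')
    (hρ : ∀ y y', y ≠ y' → 1 ≤ ρ y y')
    (hcost : Summable fun p : V × V => ξ p.1 p.2 * ρ p.1 p.2) (y' : V) : Summable (ξ · y') :=
  summable_row_of_summable_cost (ξ := fun y' y => ξ y y') (ρ := fun y' y => ρ y y')
    (fun _ _ => hξ0 _ _) (fun _ _ h => hρ _ _ h.symm) (hcost.comp_injective Prod.swap_injective) y'

lemma IsCoupling.add_sub_le_apply {m : ℝ} (hξ : IsCoupling μ ν ξ) {x : V} (hrow : Summable (ξ x))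
    (hcol : ∀ y', Summable (ξ · y')) (hν : HasSum ν m) (x' : V) :
    μ x + ν x' - m ≤ ξ x x' := by
  classical
  have hle : ∀ y', ξ x y' ≤ ν y' := fun y' =>
    hξ.2.2 y' ▸ le_hasSum (hcol y').hasSum x fun y _ => hξ.1 y y'
  have hrest := hasSum_le (fun y' => ?_) ((hξ.2.1 x ▸ hrow.hasSum).update x' 0) (hν.update x' 0)
  · linarith
  · rcases eq_or_ne y' x' with rfl | h
    · simp
    · simpa [update_of_ne h] using hle y'

lemma hasSum_dirac (x : V) : HasSum (dirac x) 1 :=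
  hasSum_ite_eq x 1

lemma hasSum_dirac_mul_dirac_mul (x x' : V) (ρ : V → V → ℝ) :
    HasSum (fun p : V × V => dirac x p.1 * dirac x' p.2 * ρ p.1 p.2) (ρ x x') := by
  convert hasSum_single (x, x') fun p hp => ?_ using 1
  · simp [dirac]
  · rw [Ne, Prod.ext_iff, not_and_or] at hp
    rcases hp with h | h <;> simp [dirac, h]

lemma IsCoupling.affine_dirac (hξ : IsCoupling μ ν ξ) (hrow : ∀ y, Summable (ξ y))
    (hcol : ∀ y', Summable (ξ · y')) {a b : ℝ} {x x' : V} (ha : 0 ≤ a)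
    (hxx' : 0 ≤ a * ξ x x' + b) :
    IsCoupling (fun y => a * μ y + b * dirac x y) (fun y' => a * ν y' + b * dirac x' y')
      (fun y y' => a * ξ y y' + b * (dirac x y * dirac x' y')) := by
  refine ⟨fun y y' => ?_, fun y => ?_, fun y' => ?_⟩
  · by_cases h : y = x ∧ y' = x'
    · obtain ⟨rfl, rfl⟩ := h
      simpa [dirac] using hxx'
    · have hδ : dirac x y * dirac x' y' = 0 := by
        rcases not_and_or.mp h with h | h <;> simp [dirac, h]
      simpa only [hδ, mul_zero, add_zero] using mul_nonneg ha (hξ.1 y y')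
  · have := ((hξ.2.1 y ▸ (hrow y).hasSum).mul_left a).add
      ((hasSum_dirac x').mul_left (b * dirac x y))
    simpa only [mul_one, mul_assoc] using this.tsum_eq
  · have := ((hξ.2.2 y' ▸ (hcol y').hasSum).mul_left a).add
      ((hasSum_dirac x).mul_left (b * dirac x' y'))
    simpa only [mul_one, mul_assoc, mul_comm (dirac x' y')] using this.tsum_eq

lemma affine_dirac_mem_couplingCosts (hρ : ∀ y y', y ≠ y' → 1 ≤ ρ y y')
    (hξ : IsCoupling μ ν ξ) {c : ℝ} (hc : HasSum (fun p : V × V => ξ p.1 p.2 * ρ p.1 p.2) c)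
    {a b : ℝ} {x x' : V} (ha : 0 ≤ a) (hxx' : 0 ≤ a * ξ x x' + b) :
    a * c + b * ρ x x' ∈
      couplingCosts ρ (fun y => a * μ y + b * dirac x y) (fun y' => a * ν y' + b * dirac x' y') := by
  refine ⟨_, hξ.affine_dirac (summable_row_of_summable_cost hξ.1 hρ hc.summable)
    (summable_col_of_summable_cost hξ.1 hρ hc.summable) ha hxx', ?_⟩
  have h := (hc.mul_left a).add ((hasSum_dirac_mul_dirac_mul x x' ρ).mul_left b)
  simpa only [add_mul, mul_assoc] using h

end Coupling

section LazyWalk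

variable {V : Type*} {G : SimpleGraph V} {x x' : V}

lemma graphDist_nonneg (G : SimpleGraph V) (y y' : V) : 0 ≤ graphDist G y y' :=
  Nat.cast_nonneg _

lemma one_le_graphDist (hconn : G.Connected) {y y' : V} (h : y ≠ y') : 1 ≤ graphDist G y y' := by
  unfold graphDist
  exact_mod_cast Nat.one_le_iff_ne_zero.mpr (hconn.pos_dist_of_ne h).ne'

lemma deg_ne_zero (hconn : G.Connected) (hfin : (G.neighborSet x).Finite) (hne : x ≠ x') :
    deg G x ≠ 0 := by
  have := hfin.to_subtype
  have := ((hconn x x').nonempty_neighborSet_left hne).to_subtype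
  exact (Nat.card_pos (α := G.neighborSet x)).ne'

lemma lazyWalk_self (G : SimpleGraph V) (t : ℝ) (x : V) : lazyWalk G t x x = 1 - t :=
  if_pos rfl

lemma lazyWalk_nonneg {t : ℝ} (ht0 : 0 ≤ t) (ht1 : t ≤ 1) (x y : V) : 0 ≤ lazyWalk G t x y := by
  unfold lazyWalk
  split_ifs
  · linarith
  · positivity
  · exact le_rfl

lemma support_lazyWalk_subset (G : SimpleGraph V) (t : ℝ) (x : V) :
    support (lazyWalk G t x) ⊆ insert x (G.neighborSet x) := by
  intro y hy
  by_contra h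
  simp only [Set.mem_insert_iff, SimpleGraph.mem_neighborSet, not_or] at h
  exact hy (by simp [lazyWalk, h.1, h.2])

lemma hasSum_lazyWalk (hfin : (G.neighborSet x).Finite) (hdeg : deg G x ≠ 0) (t : ℝ) :
    HasSum (lazyWalk G t x) 1 := by
  classical
  have hcard : (hfin.toFinset.card : ℝ) = deg G x := by
    rw [deg, Nat.card_coe_set_eq, ← Set.ncard_eq_toFinset_card _ hfin]
    rfl
  have hx : x ∉ hfin.toFinset := by simp
  have hnbr : ∀ y ∈ hfin.toFinset, lazyWalk G t x y = t / deg G x := fun y hy => by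
    rw [Set.Finite.mem_toFinset, SimpleGraph.mem_neighborSet] at hy
    simp [lazyWalk, hy, hy.ne']
  have hsum : ∑ y ∈ insert x hfin.toFinset, lazyWalk G t x y = 1 := by
    rw [Finset.sum_insert hx, lazyWalk_self, Finset.sum_congr rfl hnbr, Finset.sum_const,
      nsmul_eq_mul, hcard]
    field_simp
    ring
  exact hsum ▸ hasSum_sum_of_ne_finset_zero fun y hy =>
    notMem_support.mp fun h => hy (by simpa using support_lazyWalk_subset G t x h)

lemma lazyWalk_eq_affine_dirac {s u : ℝ} (hu : u ≠ 0) (G : SimpleGraph V) (x : V) :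
    lazyWalk G s x = fun y => s / u * lazyWalk G u x y + (1 - s / u) * dirac x y := by
  ext y
  unfold lazyWalk dirac
  split_ifs
  · field_simp
    ring
  · field_simp
    ring
  · simp

lemma couplingCosts_lazyWalk_nonempty (hconn : G.Connected)
    (hfin : ∀ v, (G.neighborSet v).Finite) (hne : x ≠ x') {t : ℝ} (ht0 : 0 ≤ t) (ht1 : t ≤ 1) :
    (couplingCosts (graphDist G) (lazyWalk G t x) (lazyWalk G t x')).Nonempty :=
  couplingCosts_nonempty (lazyWalk_nonneg ht0 ht1 x) (lazyWalk_nonneg ht0 ht1 x')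
    (hasSum_lazyWalk (hfin x) (deg_ne_zero hconn (hfin x) hne) t)
    (hasSum_lazyWalk (hfin x') (deg_ne_zero hconn (hfin x') hne.symm) t)
    (((hfin x).insert x).subset (support_lazyWalk_subset G t x))
    (((hfin x').insert x').subset (support_lazyWalk_subset G t x'))

variable {s u : ℝ}

lemma couplingCosts_lazyWalk_eq_image (hconn : G.Connected)
    (hfin : ∀ v, (G.neighborSet v).Finite) (hne : x ≠ x') (hs : 0 < s) (hsu : s ≤ u)
    (hu : u ≤ 1 / 2) :
    couplingCosts (graphDist G) (lazyWalk G s x) (lazyWalk G s x') =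
      (fun c => s / u * c + (1 - s / u) * graphDist G x x') ''
        couplingCosts (graphDist G) (lazyWalk G u x) (lazyWalk G u x') := by
  have hu0 : 0 < u := hs.trans_le hsu
  have hρ : ∀ y y', y ≠ y' → 1 ≤ graphDist G y y' := fun _ _ => one_le_graphDist hconn
  ext c
  constructor
  · rintro ⟨ξ, hξ, hc⟩
    have hmass : 1 - 2 * s ≤ ξ x x' := by
      have := hξ.add_sub_le_apply
        (summable_row_of_summable_cost hξ.1 hρ hc.summable x)
        (summable_col_of_summable_cost hξ.1 hρ hc.summable)
        (hasSum_lazyWalk (hfin x') (deg_ne_zero hconn (hfin x') hne.symm) s) x'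
      rw [lazyWalk_self, lazyWalk_self] at this
      linarith
    have hxx' : 0 ≤ u / s * ξ x x' + (1 - u / s) := by
      have h1 : u / s * (1 - 2 * s) ≤ u / s * ξ x x' := by gcongr
      have h2 : u / s * (1 - 2 * s) = u / s - 2 * u := by field_simp
      linarith
    have hmem := affine_dirac_mem_couplingCosts hρ hξ hc (by positivity) hxx'
    rw [← lazyWalk_eq_affine_dirac hs.ne', ← lazyWalk_eq_affine_dirac hs.ne'] at hmem
    refine ⟨_, hmem, ?_⟩
    field_simp
    ring
  · rintro ⟨c, ⟨ξ, hξ, hc⟩, rfl⟩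
    have hsu' : s / u ≤ 1 := (div_le_one hu0).mpr hsu
    have hxx' : 0 ≤ s / u * ξ x x' + (1 - s / u) := by
      have := mul_nonneg (div_nonneg hs.le hu0.le) (hξ.1 x x')
      linarith
    have hmem := affine_dirac_mem_couplingCosts hρ hξ hc (by positivity) hxx'
    rwa [← lazyWalk_eq_affine_dirac hu0.ne', ← lazyWalk_eq_affine_dirac hu0.ne'] at hmem

lemma W1_lazyWalk_eq (hconn : G.Connected) (hfin : ∀ v, (G.neighborSet v).Finite)
    (hne : x ≠ x') (hs : 0 < s) (hsu : s ≤ u) (hu : u ≤ 1 / 2) :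
    W1 (graphDist G) (lazyWalk G s x) (lazyWalk G s x') =
      s / u * W1 (graphDist G) (lazyWalk G u x) (lazyWalk G u x') +
        (1 - s / u) * graphDist G x x' := by
  have hsu' : 0 ≤ s / u := div_nonneg hs.le (hs.le.trans hsu)
  rw [W1_eq_sInf_couplingCosts, W1_eq_sInf_couplingCosts,
    couplingCosts_lazyWalk_eq_image hconn hfin hne hs hsu hu]
  exact (Monotone.map_csInf_of_continuousAt (by fun_prop) (fun a b h => by gcongr)
    (couplingCosts_lazyWalk_nonempty hconn hfin hne (by linarith) (by linarith))
    (couplingCosts_bddBelow (graphDist_nonneg G))).symm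

lemma kappa_div_eq_kappa_div (hconn : G.Connected) (hfin : ∀ v, (G.neighborSet v).Finite)
    (hne : x ≠ x') (hs : 0 < s) (hsu : s ≤ u) (hu : u ≤ 1 / 2) :
    kappa G s x x' / s = kappa G u x x' / u := by
  have hd : graphDist G x x' ≠ 0 := (zero_lt_one.trans_le (one_le_graphDist hconn hne)).ne'
  have hu0 : u ≠ 0 := (hs.trans_le hsu).ne'
  unfold kappa
  rw [W1_lazyWalk_eq hconn hfin hne hs hsu hu]
  field_simp
  ring

end LazyWalk

/-- the Ollivier–Ricci curvature `ric(x,x') = lim_{t→0} κ^t(x,x')/t`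
exists and equals `κ^{t₀}(x,x')/t₀` for any fixed `t₀ ∈ (0, 1/2]`. -/
theorem ric_exists_eq_kappa_div_t {V : Type*} (G : SimpleGraph V)
    (hconn : G.Connected) (hfin : ∀ v, (G.neighborSet v).Finite)
    (x x' : V) (hne : x ≠ x') (t₀ : ℝ) (ht₀ : 0 < t₀) (ht₀' : t₀ ≤ 1/2) :
    Filter.Tendsto (fun t => kappa G t x x' / t) (nhdsWithin 0 (Set.Ioi 0))
      (nhds (kappa G t₀ x x' / t₀)) := by
  refine tendsto_const_nhds.congr' (Filter.eventually_of_mem (Ioo_mem_nhdsGT ht₀) fun t ht => ?_)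
  exact (kappa_div_eq_kappa_div hconn hfin hne ht.1 ht.2.le ht₀').symm
end
end

section
/- On the regular triangular tiling of the plane (every vertex of degree 6), the Ollivier–Ricci curvature of every edge equals 0; likewise on the square tiling (every vertex of degree 4 with girth 4), the Ollivier–Ricci curvature of every edge equals 0. -/
open Classical Filter
noncomputable section

/-- The regular triangular lattice on `ℤ × ℤ`: each vertex is adjacent to the
six vertices obtained by adding `(±1,0)`, `(0,±1)`, `(1,1)`, `(-1,-1)`. -/
def triGraph : SimpleGraph (ℤ × ℤ) where
  Adj u v := (v.1 - u.1, v.2 - u.2) ∈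
    ({(1,0), (-1,0), (0,1), (0,-1), (1,1), (-1,-1)} : Set (ℤ × ℤ))
  symm := by
    constructor
    rintro ⟨a, b⟩ ⟨c, d⟩ h
    simp only [Set.mem_insert_iff, Set.mem_singleton_iff, Prod.mk.injEq] at h ⊢
    omega
  loopless := by
    constructor
    rintro ⟨a, b⟩ h
    simp only [Set.mem_insert_iff, Set.mem_singleton_iff, Prod.mk.injEq] at h
    omega

/-- The square lattice `ℤ²`: adjacency iff the ℓ¹-distance is 1. -/
def squareGraph : SimpleGraph (ℤ × ℤ) where
  Adj u v := (v.1 - u.1).natAbs + (v.2 - u.2).natAbs = 1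
  symm := by constructor; rintro ⟨a, b⟩ ⟨c, d⟩ h; simp only at h ⊢; omega
  loopless := by constructor; rintro ⟨a, b⟩ h; simp only at h; omega


/-!
For an edge `x ~ x'` of a Cayley graph of `ℤ²`, put `e = x' - x`. The lazy walk at `x'` is the
translate by `e` of the lazy walk at `x`, and `y ~ y + e` for every `y`, so shifting all mass by `e`
is a coupling of cost `1`. Conversely, a homomorphism `f : ℤ² → ℝ` with `f ≤ 1` on every step and
`f e = 1` is `1`-Lipschitz for the graph distance, while the means of `f` under the two walks
differ by exactly `f e = 1`; so every coupling costs at least `1`. Hence `W₁ = 1 = d(x, x')` and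
`κ^t(x, x') = 0` for all `t ∈ [0, 1]`.
-/

open Topology

section GraphDist

variable {V : Type*} {G : SimpleGraph V} {u v : V}

lemma graphDist_nonneg_s15 : 0 ≤ graphDist G u v := Nat.cast_nonneg _

lemma graphDist_of_adj (h : G.Adj u v) : graphDist G u v = 1 := by
  simp [graphDist, SimpleGraph.dist_eq_one_iff_adj.mpr h]

lemma one_le_graphDist_s15 (hG : G.Preconnected) (h : u ≠ v) : 1 ≤ graphDist G u v := by
  unfold graphDist
  exact_mod_cast (hG u v).pos_dist_of_ne h

lemma sub_le_length_of_forall_adj {f : V → ℝ} (hf : ∀ u v, G.Adj u v → f v - f u ≤ 1)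
    (p : G.Walk u v) : f v - f u ≤ p.length := by
  induction p with
  | nil => simp
  | cons h p ih =>
    rw [SimpleGraph.Walk.length_cons, Nat.cast_succ]
    linarith [hf _ _ h]

lemma sub_le_graphDist (hG : G.Preconnected) {f : V → ℝ}
    (hf : ∀ u v, G.Adj u v → f v - f u ≤ 1) (u v : V) : f v - f u ≤ graphDist G u v := by
  obtain ⟨p, hp⟩ := (hG u v).exists_walk_length_eq_dist
  simpa [graphDist, hp] using sub_le_length_of_forall_adj hf p

end GraphDist

section Coupling

variable {V : Type*} {μ ν : V → ℝ} {ξ ρ : V → V → ℝ}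

lemma summable_of_summable_mul {F g : V → ℝ} (w : V) (hF : ∀ y, 0 ≤ F y) (hg : ∀ y, 0 ≤ g y)
    (hg1 : ∀ y, y ≠ w → 1 ≤ g y) (h : Summable fun y => F y * g y) : Summable F := by
  refine .of_nonneg_of_le hF (fun y => ?_) (h.add (hasSum_ite_eq w (F w)).summable)
  by_cases hy : y = w
  · subst hy
    simp only [if_true]
    nlinarith [hF y, hg y]
  · simp only [hy, if_false, add_zero]
    nlinarith [hF y, hg1 y hy]

/-- The cost dominates the plan off the diagonal, so rows are summable; this is needed because the
`tsum` of a non-summable row is `0` whatever its entries. -/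
lemma IsCoupling.eq_zero_of_left_eq_zero (h : IsCoupling μ ν ξ) (hρ : ∀ y y', 0 ≤ ρ y y')
    (hρ1 : ∀ y y', y ≠ y' → 1 ≤ ρ y y') (hc : Summable fun p : V × V => ξ p.1 p.2 * ρ p.1 p.2)
    {y : V} (hy : μ y = 0) (y' : V) : ξ y y' = 0 := by
  have hrow : Summable (ξ y) :=
    summable_of_summable_mul y (h.1 y) (hρ y) (fun y' hy' => hρ1 y y' (Ne.symm hy'))
      (hc.prod_factor y)
  have hzero : HasSum (ξ y) 0 := by
    simpa [h.2.1 y, hy] using hrow.hasSum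
  exact congrFun ((hasSum_zero_iff_of_nonneg (h.1 y)).1 hzero) y'

lemma IsCoupling.symm (h : IsCoupling μ ν ξ) : IsCoupling ν μ (flip ξ) :=
  ⟨fun y y' => h.1 y' y, h.2.2, h.2.1⟩

lemma IsCoupling.eq_zero_of_right_eq_zero (h : IsCoupling μ ν ξ) (hρ : ∀ y y', 0 ≤ ρ y y')
    (hρ1 : ∀ y y', y ≠ y' → 1 ≤ ρ y y') (hc : Summable fun p : V × V => ξ p.1 p.2 * ρ p.1 p.2)
    {y' : V} (hy' : ν y' = 0) (y : V) : ξ y y' = 0 :=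
  h.symm.eq_zero_of_left_eq_zero (ρ := flip ρ) (fun _ _ => hρ _ _)
    (fun _ _ hne => hρ1 _ _ hne.symm) hc.prod_symm hy' y

/-- Weak Kantorovich duality for finitely supported marginals. -/
lemma IsCoupling.sum_sub_sum_le (h : IsCoupling μ ν ξ) (hρ : ∀ y y', 0 ≤ ρ y y')
    (hρ1 : ∀ y y', y ≠ y' → 1 ≤ ρ y y') {c : ℝ}
    (hc : HasSum (fun p : V × V => ξ p.1 p.2 * ρ p.1 p.2) c) {s t : Finset V}
    (hs : ∀ y ∉ s, μ y = 0) (ht : ∀ y ∉ t, ν y = 0) {f : V → ℝ}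
    (hf : ∀ y y', f y' - f y ≤ ρ y y') :
    ∑ y ∈ t, ν y * f y - ∑ y ∈ s, μ y * f y ≤ c := by
  have hξs : ∀ y ∉ s, ∀ y', ξ y y' = 0 := fun y hy =>
    h.eq_zero_of_left_eq_zero hρ hρ1 hc.summable (hs y hy)
  have hξt : ∀ y' ∉ t, ∀ y, ξ y y' = 0 := fun y' hy' =>
    h.eq_zero_of_right_eq_zero hρ hρ1 hc.summable (ht y' hy')
  have hrow : ∀ y, ∑ y' ∈ t, ξ y y' = μ y := fun y => by
    rw [← h.2.1 y, tsum_eq_sum fun y' hy' => hξt y' hy' y]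
  have hcol : ∀ y', ∑ y ∈ s, ξ y y' = ν y' := fun y' => by
    rw [← h.2.2 y', tsum_eq_sum fun y hy => hξs y hy y']
  have hc_eq : c = ∑ p ∈ s ×ˢ t, ξ p.1 p.2 * ρ p.1 p.2 := by
    refine hc.unique (hasSum_sum_of_ne_finset_zero fun p hp => ?_)
    rcases not_and_or.1 (Finset.mem_product.not.1 hp) with hp | hp
    · rw [hξs _ hp, zero_mul]
    · rw [hξt _ hp, zero_mul]
  calc ∑ y ∈ t, ν y * f y - ∑ y ∈ s, μ y * f y
      = ∑ p ∈ s ×ˢ t, ξ p.1 p.2 * (f p.2 - f p.1) := by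
        simp only [← hrow, ← hcol, Finset.sum_mul, mul_sub, Finset.sum_sub_distrib,
          Finset.sum_product]
        rw [Finset.sum_comm]
    _ ≤ ∑ p ∈ s ×ˢ t, ξ p.1 p.2 * ρ p.1 p.2 :=
        Finset.sum_le_sum fun p _ => mul_le_mul_of_nonneg_left (hf _ _) (h.1 _ _)
    _ = c := hc_eq.symm

lemma W1_eq_of_isCoupling_of_le (h : IsCoupling μ ν ξ) {c : ℝ}
    (hc : HasSum (fun p : V × V => ξ p.1 p.2 * ρ p.1 p.2) c)
    (hmin : ∀ ξ' c', IsCoupling μ ν ξ' → HasSum (fun p : V × V => ξ' p.1 p.2 * ρ p.1 p.2) c' →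
      c ≤ c') :
    W1 ρ μ ν = c :=
  IsLeast.csInf_eq ⟨⟨ξ, h, hc⟩, fun c' ⟨ξ', h', hc'⟩ => hmin ξ' c' h' hc'⟩

end Coupling

section Translation

variable {A : Type*} [AddGroup A] {μ ν : A → ℝ}

def translatePlan (μ : A → ℝ) (e : A) (y y' : A) : ℝ := if y' = y + e then μ y else 0

lemma isCoupling_translatePlan (e : A) (hμ : ∀ y, 0 ≤ μ y) (hν : ∀ y, ν (y + e) = μ y) :
    IsCoupling μ ν (translatePlan μ e) := by
  refine ⟨fun y y' => ?_, fun y => by simp [translatePlan], fun y' => ?_⟩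
  · unfold translatePlan
    split_ifs
    exacts [hμ y, le_rfl]
  · simp_rw [translatePlan, eq_comm (a := y'), ← eq_sub_iff_add_eq]
    rw [tsum_ite_eq, ← hν, sub_add_cancel]

lemma hasSum_translatePlan_mul {ρ : A → A → ℝ} (e : A) (hρ : ∀ y, ρ y (y + e) = 1) {a : ℝ}
    (hμ : HasSum μ a) :
    HasSum (fun p : A × A => translatePlan μ e p.1 p.2 * ρ p.1 p.2) a := by
  have hinj : Function.Injective fun y : A => (y, y + e) := fun y z h => congrArg Prod.fst h
  refine (hinj.hasSum_iff fun p hp => ?_).1 (by simpa [Function.comp_def, translatePlan, hρ])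
  have : p.2 ≠ p.1 + e := fun h => hp ⟨p.1, Prod.ext rfl h.symm⟩
  simp [translatePlan, this]

end Translation

section Cayley

variable {A : Type*} [AddCommGroup A] {G : SimpleGraph A} {N : Finset A}

def closedNbhd (N : Finset A) (x : A) : Finset A := insert x (N.map (addLeftEmbedding x))

variable (hN : ∀ u v, G.Adj u v ↔ v - u ∈ N)
include hN

lemma deg_eq_card (x : A) : deg G x = N.card := by
  have : {y | G.Adj x y} = ↑(N.map (addLeftEmbedding x)) := by
    ext y
    simp only [Set.mem_ofPred_eq, hN, Finset.coe_map, Set.mem_image, Finset.mem_coe,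
      addLeftEmbedding_apply]
    exact ⟨fun h => ⟨y - x, h, add_sub_cancel x y⟩, fun ⟨n, hn, hy⟩ => by simpa [← hy]⟩
  rw [deg, this, Nat.card_coe_set_eq, Set.ncard_coe_finset, Finset.card_map]

lemma lazyWalk_add_add (t : ℝ) (x e y : A) :
    lazyWalk G t (x + e) (y + e) = lazyWalk G t x y := by
  simp only [lazyWalk, deg_eq_card hN, add_left_inj, hN, add_sub_add_right_eq_sub]

lemma lazyWalk_eq_zero_of_notMem_closedNbhd (t : ℝ) {x y : A} (hy : y ∉ closedNbhd N x) :
    lazyWalk G t x y = 0 := by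
  simp only [closedNbhd, Finset.mem_insert, Finset.mem_map, addLeftEmbedding_apply,
    not_or, not_exists, not_and] at hy
  have hadj : ¬ G.Adj x y := fun h => hy.2 (y - x) ((hN x y).1 h) (add_sub_cancel x y)
  simp [lazyWalk, hy.1, hadj]

lemma sum_lazyWalk_closedNbhd (t : ℝ) (x : A) (hN0 : N.Nonempty) :
    ∑ y ∈ closedNbhd N x, lazyWalk G t x y = 1 := by
  have h0 : (0 : A) ∉ N := fun h => G.loopless.irrefl x ((hN x x).2 (by simpa using h))
  have hx : x ∉ N.map (addLeftEmbedding x) := by simpa using h0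
  have hstep : ∀ n ∈ N, lazyWalk G t x (x + n) = t / N.card := fun n hn => by
    have hne : x + n ≠ x := fun h => h0 (by simpa [← add_eq_left.1 h] using hn)
    simp [lazyWalk, hne, hN, hn, deg_eq_card hN]
  rw [closedNbhd, Finset.sum_insert hx, Finset.sum_map]
  simp only [addLeftEmbedding_apply, Finset.sum_congr rfl hstep, Finset.sum_const, nsmul_eq_mul]
  rw [lazyWalk, if_pos rfl]
  field_simp [hN0.card_pos.ne']
  ring

theorem W1_lazyWalk_of_adj (hG : G.Preconnected) {x x' : A} (hx : G.Adj x x') (f : A →+ ℝ)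
    (hfN : ∀ n ∈ N, f n ≤ 1) (hfe : f (x' - x) = 1) {t : ℝ} (ht0 : 0 ≤ t) (ht1 : t ≤ 1) :
    W1 (graphDist G) (lazyWalk G t x) (lazyWalk G t x') = 1 := by
  obtain ⟨e, rfl⟩ : ∃ e, x' = x + e := ⟨x' - x, (add_sub_cancel x x').symm⟩
  rw [add_sub_cancel_left] at hfe
  have he : e ∈ N := by simpa using (hN _ _).1 hx
  have hN0 : N.Nonempty := ⟨e, he⟩
  have hν : ∀ y, lazyWalk G t (x + e) (y + e) = lazyWalk G t x y := lazyWalk_add_add hN t x e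
  have hs : ∀ y ∉ closedNbhd N x, lazyWalk G t x y = 0 := fun _ =>
    lazyWalk_eq_zero_of_notMem_closedNbhd hN t
  have hmass := sum_lazyWalk_closedNbhd hN t x hN0
  have hμ0 : ∀ y, 0 ≤ lazyWalk G t x y := fun y => by
    unfold lazyWalk
    split_ifs <;> first | linarith | positivity
  have hcoup := isCoupling_translatePlan (ν := lazyWalk G t (x + e)) e hμ0 hν
  have hcost : HasSum (fun p : A × A => translatePlan (lazyWalk G t x) e p.1 p.2 *
      graphDist G p.1 p.2) 1 :=
    hasSum_translatePlan_mul (ρ := graphDist G) e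
      (fun y => graphDist_of_adj ((hN _ _).2 (by simpa using he)))
      (hmass ▸ hasSum_sum_of_ne_finset_zero hs)
  refine W1_eq_of_isCoupling_of_le hcoup hcost fun ξ c hξ hc => ?_
  have ht : ∀ y ∉ (closedNbhd N x).map (addRightEmbedding e), lazyWalk G t (x + e) y = 0 :=
    fun y hy => by
      rw [← sub_add_cancel y e, hν]
      exact hs _ fun h => hy (Finset.mem_map.2 ⟨y - e, h, sub_add_cancel y e⟩)
  have hf : ∀ u v, f v - f u ≤ graphDist G u v :=
    sub_le_graphDist hG fun u v h => map_sub f v u ▸ hfN _ ((hN u v).1 h)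
  simpa only [Finset.sum_map, addRightEmbedding_apply, hν, map_add, mul_add,
    Finset.sum_add_distrib, add_sub_cancel_left, ← Finset.sum_mul, hmass, hfe, one_mul] using
    hξ.sum_sub_sum_le (fun _ _ => graphDist_nonneg_s15) (fun _ _ => one_le_graphDist_s15 hG) hc hs ht hf

theorem tendsto_kappa_div_of_adj (hG : G.Preconnected) {x x' : A} (hx : G.Adj x x')
    (f : A →+ ℝ) (hfN : ∀ n ∈ N, f n ≤ 1) (hfe : f (x' - x) = 1) :
    Tendsto (fun t => kappa G t x x' / t) (𝓝[>] 0) (𝓝 0) := by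
  refine tendsto_const_nhds.congr' ?_
  filter_upwards [Ioo_mem_nhdsGT one_pos] with t ht
  rw [kappa, W1_lazyWalk_of_adj hN hG hx f hfN hfe ht.1.le ht.2.le, graphDist_of_adj hx]
  norm_num

end Cayley

def triSteps : Finset (ℤ × ℤ) := {(1, 0), (-1, 0), (0, 1), (0, -1), (1, 1), (-1, -1)}

def squareSteps : Finset (ℤ × ℤ) := {(1, 0), (-1, 0), (0, 1), (0, -1)}

lemma squareSteps_subset_triSteps : squareSteps ⊆ triSteps := by decide

lemma triGraph_adj_iff (u v : ℤ × ℤ) : triGraph.Adj u v ↔ v - u ∈ triSteps := by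
  simp [triGraph, triSteps, Prod.ext_iff]

lemma squareGraph_adj_iff (u v : ℤ × ℤ) : squareGraph.Adj u v ↔ v - u ∈ squareSteps := by
  simp only [squareGraph, squareSteps, Finset.mem_insert, Finset.mem_singleton, Prod.ext_iff,
    Prod.fst_sub, Prod.snd_sub]
  omega

lemma squareGraph_preconnected : squareGraph.Preconnected := by
  have hℤ := SimpleGraph.hasse_preconnected_of_succ ℤ
  refine (hℤ.boxProd hℤ).mono fun u v h => ?_
  simp only [SimpleGraph.boxProd_adj, SimpleGraph.hasse_adj, Order.covBy_iff_add_one_eq] at h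
  simp only [squareGraph]
  omega

lemma triGraph_preconnected : triGraph.Preconnected :=
  squareGraph_preconnected.mono fun u v h =>
    (triGraph_adj_iff u v).2 (squareSteps_subset_triSteps ((squareGraph_adj_iff u v).1 h))

lemma exists_addMonoidHom_of_mem_triSteps {e : ℤ × ℤ} (he : e ∈ triSteps) :
    ∃ f : ℤ × ℤ →+ ℝ, (∀ n ∈ triSteps, f n ≤ 1) ∧ f e = 1 := by
  let π₁ : ℤ × ℤ →+ ℝ := (Int.castAddHom ℝ).comp (AddMonoidHom.fst ℤ ℤ)
  let π₂ : ℤ × ℤ →+ ℝ := (Int.castAddHom ℝ).comp (AddMonoidHom.snd ℤ ℤ)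
  simp only [triSteps, Finset.mem_insert, Finset.mem_singleton] at he
  rcases he with rfl | rfl | rfl | rfl | rfl | rfl
  exacts [⟨π₁, by simp [π₁, triSteps], by simp [π₁]⟩,
    ⟨-π₁, by simp [π₁, triSteps], by simp [π₁]⟩,
    ⟨π₂, by simp [π₂, triSteps], by simp [π₂]⟩,
    ⟨-π₂, by simp [π₂, triSteps], by simp [π₂]⟩,
    ⟨π₁, by simp [π₁, triSteps], by simp [π₁]⟩,
    ⟨-π₁, by simp [π₁, triSteps], by simp [π₁]⟩]

/-- on the regular triangular tiling and on the square tiling,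
the Ollivier–Ricci curvature of every edge equals `0`. -/
theorem triangular_and_square_tiling_ric_zero :
    (∀ x x', triGraph.Adj x x' →
      Filter.Tendsto (fun t => kappa triGraph t x x' / t)
        (nhdsWithin 0 (Set.Ioi 0)) (nhds 0)) ∧
    (∀ x x', squareGraph.Adj x x' →
      Filter.Tendsto (fun t => kappa squareGraph t x x' / t)
        (nhdsWithin 0 (Set.Ioi 0)) (nhds 0)) := by
  constructor
  · intro x x' hx
    obtain ⟨f, hf, hfe⟩ := exists_addMonoidHom_of_mem_triSteps ((triGraph_adj_iff x x').1 hx)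
    exact tendsto_kappa_div_of_adj triGraph_adj_iff triGraph_preconnected hx f hf hfe
  · intro x x' hx
    obtain ⟨f, hf, hfe⟩ := exists_addMonoidHom_of_mem_triSteps
      (squareSteps_subset_triSteps ((squareGraph_adj_iff x x').1 hx))
    exact tendsto_kappa_div_of_adj squareGraph_adj_iff squareGraph_preconnected hx f
      (fun n hn => hf n (squareSteps_subset_triSteps hn)) hfe
end
end
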